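/- Let C₁, C₂ be disjoint finite sets of positive finite Radon measures such that for each ν ∈ C₂, supp(ν) ⊄ ⋃_{μ ∈ C₁} supp(μ). Then there exists h ∈ C_0(X) with sup_{μ ∈ C₁} ∫ h dμ < inf_{ν ∈ C₂} ∫ h dν. -/
import Mathlib


open MeasureTheory
open scoped NNReal ENNReal

/-- The topological support of a Borel measure: the set of points all of whose open
neighborhoods have positive measure. -/
def msupport {X : Type*} [TopologicalSpace X] [MeasurableSpace X] (μ : Measure X) : Set X :=
  {x | ∀ U : Set X, IsOpen U → x ∈ U → 0 < μ U}

lemma isClosed_msupport {X : Type*} [TopologicalSpace X] [MeasurableSpace X] (μ : Measure X) :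
    IsClosed (msupport μ) := by
  rw [← isOpen_compl_iff, isOpen_iff_forall_mem_open]
  intro x hx
  simp only [msupport, Set.mem_compl_iff, Set.mem_setOf_eq, not_forall] at hx
  obtain ⟨U, hU, hxU, hμU⟩ := hx
  refine ⟨U, fun y hy => ?_, hU, hxU⟩
  simp only [msupport, Set.mem_compl_iff, Set.mem_setOf_eq, not_forall]
  exact ⟨U, hU, hy, hμU⟩

/-- A compact set disjoint from the support has measure zero. -/
lemma measure_eq_zero_of_compact {X : Type*} [TopologicalSpace X] [MeasurableSpace X]
    (μ : Measure X) {K : Set X} (hK : IsCompact K) (hdisj : K ⊆ (msupport μ)ᶜ) : μ K = 0 := by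
  have : ∀ x ∈ K, ∃ U : Set X, IsOpen U ∧ x ∈ U ∧ μ U = 0 := by
    intro x hx
    have := hdisj hx
    simp only [msupport, Set.mem_compl_iff, Set.mem_setOf_eq, not_forall, not_lt,
      nonpos_iff_eq_zero] at this
    obtain ⟨U, hU, hxU, hμU⟩ := this
    exact ⟨U, hU, hxU, hμU⟩
  choose U hUopen hxU hμU using this
  obtain ⟨t, ht⟩ := hK.elim_nhds_subcover' (fun x hx => U x hx)
    (fun x hx => (hUopen x hx).mem_nhds (hxU x hx))
  have : μ K ≤ ∑ x ∈ t, μ (U x.1 x.2) :=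
    (measure_mono ht).trans (measure_biUnion_finset_le t _)
  simpa [hμU] using this

/-- Let `C₁ = {μ₁,…,μ_p}`, `C₂ = {ν₁,…,ν_q}` be disjoint finite sets of positive finite Radon
measures on a locally compact Hausdorff space such that for each `j`, `supp(ν j)` is not
contained in `⋃ i, supp(μ i)`. Then there is `h ∈ C₀(X)` with
`sup_{μ ∈ C₁} ∫ h dμ < inf_{ν ∈ C₂} ∫ h dν`. -/
theorem stmt_6 {X : Type*} [TopologicalSpace X] [T2Space X] [LocallyCompactSpace X]
    [MeasurableSpace X] [BorelSpace X] {p q : ℕ} [NeZero p] [NeZero q]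
    (μ : Fin p → Measure X) (ν : Fin q → Measure X)
    (hμfin : ∀ i, IsFiniteMeasure (μ i)) (hνfin : ∀ j, IsFiniteMeasure (ν j))
    (hdis : ∀ i j, μ i ≠ ν j)
    (hsupp : ∀ j, ¬ msupport (ν j) ⊆ ⋃ i, msupport (μ i)) :
    ∃ h : ZeroAtInftyContinuousMap X ℝ,
      sSup (Set.range fun i => ∫ x, h x ∂(μ i)) < sInf (Set.range fun j => ∫ x, h x ∂(ν j)) := by
  classical
  set K : Set X := ⋃ i, msupport (μ i) with hK
  have hKclosed : IsClosed K := isClosed_iUnion_of_finite fun i => isClosed_msupport (μ i)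
  -- pick points x j in supp (ν j) outside K
  have hx : ∀ j, ∃ x, x ∈ msupport (ν j) ∧ x ∉ K := fun j => by
    obtain ⟨x, hx1, hx2⟩ := Set.not_subset.mp (hsupp j); exact ⟨x, hx1, hx2⟩
  choose x hxν hxK using hx
  -- compact neighborhoods inside Kᶜ
  have hC : ∀ j, ∃ C ∈ nhds (x j), C ⊆ Kᶜ ∧ IsCompact C := fun j =>
    local_compact_nhds (hKclosed.isOpen_compl.mem_nhds (hxK j))
  choose C hCnhds hCK hCcomp using hC
  -- bump functions supported in interior C j
  have hf : ∀ j, ∃ f : C(X, ℝ), Set.EqOn f 1 {x j} ∧ Set.EqOn f 0 (interior (C j))ᶜ ∧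
      HasCompactSupport f ∧ ∀ y, f y ∈ Set.Icc (0 : ℝ) 1 := by
    intro j
    refine exists_continuous_one_zero_of_isCompact isCompact_singleton
      isOpen_interior.isClosed_compl ?_
    rw [Set.disjoint_singleton_left]
    simpa using mem_interior_iff_mem_nhds.mpr (hCnhds j)
  choose f hf1 hf0 hfc hf01 using hf
  -- tsupport of f j avoids K
  have htsupp : ∀ j, tsupport (f j : X → ℝ) ⊆ Kᶜ := by
    intro j
    have h1 : Function.support (f j : X → ℝ) ⊆ interior (C j) := by
      intro y hy
      by_contra hyc
      exact hy (hf0 j hyc)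
    calc tsupport (f j : X → ℝ) ⊆ closure (interior (C j)) := closure_mono h1
      _ ⊆ C j := closure_minimal interior_subset (hCcomp j).isClosed
      _ ⊆ Kᶜ := hCK j
  -- the sum
  set g : C(X, ℝ) := ∑ j, f j with hg
  have hgcoe : ∀ y, g y = ∑ j, f j y := fun y => by simp [hg]
  have hgnonneg : ∀ y, 0 ≤ g y := fun y => by
    rw [hgcoe]; exact Finset.sum_nonneg fun j _ => (hf01 j y).1
  have hgtsupp' : tsupport (g : X → ℝ) ⊆ ⋃ j, tsupport (f j : X → ℝ) := by
    have h1 : Function.support (g : X → ℝ) ⊆ ⋃ j, tsupport (f j : X → ℝ) := by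
      intro y hy
      by_contra hyc
      apply hy
      rw [hgcoe]
      refine Finset.sum_eq_zero fun j _ => ?_
      have : y ∉ tsupport (f j : X → ℝ) := fun hmem => hyc (Set.mem_iUnion.mpr ⟨j, hmem⟩)
      exact image_eq_zero_of_notMem_tsupport this
    have h2 : IsClosed (⋃ j, tsupport (f j : X → ℝ)) :=
      isClosed_iUnion_of_finite fun j => isClosed_tsupport _
    exact closure_minimal h1 h2
  have hgc : HasCompactSupport (g : X → ℝ) :=
    IsCompact.of_isClosed_subset (isCompact_iUnion fun j => (hfc j).isCompact)
      (isClosed_tsupport _) hgtsupp'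
  have hgtsupp : tsupport (g : X → ℝ) ⊆ Kᶜ :=
    hgtsupp'.trans (Set.iUnion_subset htsupp)
  -- integrals against μ i are zero
  have hμint : ∀ i, ∫ y, g y ∂(μ i) = 0 := by
    intro i
    have hnull : μ i (tsupport (g : X → ℝ)) = 0 := by
      apply measure_eq_zero_of_compact (μ i) hgc
      refine hgtsupp.trans (Set.compl_subset_compl.mpr ?_)
      exact Set.subset_iUnion (fun i => msupport (μ i)) i
    have hae : (g : X → ℝ) =ᵐ[μ i] 0 :=
      measure_mono_null (fun y hy => subset_tsupport _ hy) hnull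
    rw [integral_congr_ae hae]; simp
  -- integrals against ν j are positive
  have hνint : ∀ j, 0 < ∫ y, g y ∂(ν j) := by
    intro j
    have hfint : ∀ k, Integrable (f k : X → ℝ) (ν j) :=
      fun k => (f k).continuous.integrable_of_hasCompactSupport (hfc k)
    have hsum : ∫ y, g y ∂(ν j) = ∑ k, ∫ y, f k y ∂(ν j) := by
      calc ∫ y, g y ∂(ν j) = ∫ y, ∑ k, f k y ∂(ν j) := by
            exact integral_congr_ae (Filter.Eventually.of_forall fun y => hgcoe y)
        _ = ∑ k, ∫ y, f k y ∂(ν j) := integral_finset_sum _ fun k _ => hfint k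
    have hpos : 0 < ∫ y, f j y ∂(ν j) := by
      rw [integral_pos_iff_support_of_nonneg (fun y => (hf01 j y).1) (hfint j)]
      have hV : (0 : ℝ≥0∞) < ν j {y | 0 < f j y} := by
        apply hxν j
        · exact isOpen_lt continuous_const (f j).continuous
        · simpa using lt_of_lt_of_eq one_pos (hf1 j rfl).symm
      refine lt_of_lt_of_le hV (measure_mono fun y hy => ?_)
      exact ne_of_gt hy
    rw [hsum]
    refine lt_of_lt_of_le hpos ?_
    exact Finset.single_le_sum (f := fun k => ∫ y, f k y ∂(ν j))
      (fun k _ => integral_nonneg fun y => (hf01 k y).1) (Finset.mem_univ j)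
  -- package g as a C₀ function
  refine ⟨⟨g, hgc.is_zero_at_infty⟩, ?_⟩
  have hsup : sSup (Set.range fun i => ∫ y, g y ∂(μ i)) = 0 := by
    have : (Set.range fun i => ∫ y, g y ∂(μ i)) = {0} := by
      rw [Set.eq_singleton_iff_nonempty_unique_mem]
      constructor
      · exact ⟨∫ y, g y ∂(μ 0), Set.mem_range_self 0⟩
      · rintro r ⟨i, rfl⟩; exact hμint i
    rw [this, csSup_singleton]
  have hne : (Set.range fun j => ∫ y, g y ∂(ν j)).Nonempty := Set.range_nonempty _
  have hfin : (Set.range fun j => ∫ y, g y ∂(ν j)).Finite := Set.finite_range _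
  obtain ⟨j, hj⟩ := hne.csInf_mem hfin
  calc sSup (Set.range fun i => ∫ y, (⟨g, hgc.is_zero_at_infty⟩ :
      ZeroAtInftyContinuousMap X ℝ) y ∂(μ i)) = 0 := hsup
    _ < ∫ y, g y ∂(ν j) := hνint j
    _ = sInf (Set.range fun j => ∫ y, g y ∂(ν j)) := hj
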